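/- arXiv:2507.19268 — 2 statements merged into one kernel-verified Lean document; each statement's English description precedes it below -/
import Mathlib

section
/- Suppose (v, B, q, 𝒯) is a smooth solution of the low Mach number MHD system 𝒯^{-1} D_t v − B^k∂_k B = −∂q, D_t B − B^k∂_k v = −(div v) B, D_t 𝒯 = 𝒯 Δ𝒯, div v = Δ𝒯, div B = 0. Set b = 𝒯^{1/2} B and D_± = D_t ± 𝒯^{1/2} B^k ∂_k. Then the Riemann-invariant form of the momentum and induction equations holds: D_−(v + b) = −𝒯 ∇q − (1/2) b div(v + 2b) and D_+(v − b) = −𝒯 ∇q + (1/2) b div(v − 2b). -/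
open MeasureTheory

/-- Spatial partial derivative ∂_i of a function of (t,x) ∈ ℝ × ℝⁿ. -/
noncomputable def sd (n : ℕ) (i : Fin n) (f : ℝ × (Fin n → ℝ) → ℝ)
    (p : ℝ × (Fin n → ℝ)) : ℝ :=
  fderiv ℝ f p ((0 : ℝ), Pi.single i 1)

/-- Time partial derivative ∂_t. -/
noncomputable def td (n : ℕ) (f : ℝ × (Fin n → ℝ) → ℝ) (p : ℝ × (Fin n → ℝ)) : ℝ :=
  fderiv ℝ f p ((1 : ℝ), (0 : Fin n → ℝ))

/-- Material derivative D_t = ∂_t + v^k ∂_k. -/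
noncomputable def matD (n : ℕ) (v : ℝ × (Fin n → ℝ) → Fin n → ℝ)
    (f : ℝ × (Fin n → ℝ) → ℝ) (p : ℝ × (Fin n → ℝ)) : ℝ :=
  td n f p + ∑ i, v p i * sd n i f p

/-- Spatial Laplacian. -/
noncomputable def lap (n : ℕ) (f : ℝ × (Fin n → ℝ) → ℝ) (p : ℝ × (Fin n → ℝ)) : ℝ :=
  ∑ i, sd n i (fun q => sd n i f q) p

/-- Spatial divergence of a time-dependent vector field. -/
noncomputable def divg (n : ℕ) (u : ℝ × (Fin n → ℝ) → Fin n → ℝ)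
    (p : ℝ × (Fin n → ℝ)) : ℝ :=
  ∑ i, sd n i (fun q => u q i) p
lemma dkey {n : ℕ} {v B : ℝ × (Fin n → ℝ) → Fin n → ℝ} {𝒯 : ℝ × (Fin n → ℝ) → ℝ}
    (hv : ContDiff ℝ (⊤ : ℕ∞) v) (hB : ContDiff ℝ (⊤ : ℕ∞) B) (h𝒯 : ContDiff ℝ (⊤ : ℕ∞) 𝒯)
    (h𝒯pos : ∀ p, 0 < 𝒯 p) (c : ℝ) (i j : Fin n) (p w : ℝ × (Fin n → ℝ)) :
    fderiv ℝ (fun r => v r i + c * Real.sqrt (𝒯 r) * B r j) p w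
      = fderiv ℝ (fun r => v r i) p w
        + c * Real.sqrt (𝒯 p) * fderiv ℝ (fun r => B r j) p w
        + c * B p j * ((2 * Real.sqrt (𝒯 p))⁻¹ * fderiv ℝ 𝒯 p w) := by
  have hvi : HasFDerivAt (fun r => v r i) (fderiv ℝ (fun r => v r i) p) p :=
    ((differentiable_pi.mp (hv.differentiable (by simp)) i) p).hasFDerivAt
  have hBj : HasFDerivAt (fun r => B r j) (fderiv ℝ (fun r => B r j) p) p :=
    ((differentiable_pi.mp (hB.differentiable (by simp)) j) p).hasFDerivAt
  have hT : HasFDerivAt 𝒯 (fderiv ℝ 𝒯 p) p := ((h𝒯.differentiable (by simp)) p).hasFDerivAt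
  have hsq : HasFDerivAt (fun r => Real.sqrt (𝒯 r))
      ((1 / (2 * Real.sqrt (𝒯 p))) • fderiv ℝ 𝒯 p) p := hT.sqrt (ne_of_gt (h𝒯pos p))
  have hcs : HasFDerivAt (fun r => c * Real.sqrt (𝒯 r))
      (c • ((1 / (2 * Real.sqrt (𝒯 p))) • fderiv ℝ 𝒯 p)) p := hsq.const_mul c
  have hprod := hcs.mul hBj
  have h2 : fderiv ℝ (fun r => v r i + c * Real.sqrt (𝒯 r) * B r j) p w
      = (fderiv ℝ (fun r => v r i) p
        + ((c * Real.sqrt (𝒯 p)) • fderiv ℝ (fun r => B r j) p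
          + B p j • (c • ((1 / (2 * Real.sqrt (𝒯 p))) • fderiv ℝ 𝒯 p)))) w := by
    exact congrArg (fun L => L w) (hvi.add hprod).fderiv
  simpa [ContinuousLinearMap.add_apply, ContinuousLinearMap.smul_apply, smul_eq_mul,
    one_div] using h2.trans (by simp [ContinuousLinearMap.add_apply,
    ContinuousLinearMap.smul_apply, smul_eq_mul, one_div]; ring)

lemma sd_key {n : ℕ} {v B : ℝ × (Fin n → ℝ) → Fin n → ℝ} {𝒯 : ℝ × (Fin n → ℝ) → ℝ}
    (hv : ContDiff ℝ (⊤ : ℕ∞) v) (hB : ContDiff ℝ (⊤ : ℕ∞) B) (h𝒯 : ContDiff ℝ (⊤ : ℕ∞) 𝒯)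
    (h𝒯pos : ∀ p, 0 < 𝒯 p) (c : ℝ) (i j k : Fin n) (p : ℝ × (Fin n → ℝ)) :
    sd n k (fun r => v r i + c * Real.sqrt (𝒯 r) * B r j) p
      = sd n k (fun r => v r i) p
        + c * Real.sqrt (𝒯 p) * sd n k (fun r => B r j) p
        + c * B p j * ((2 * Real.sqrt (𝒯 p))⁻¹ * sd n k 𝒯 p) := by
  simp only [sd]; exact dkey hv hB h𝒯 h𝒯pos c i j p _

lemma td_key {n : ℕ} {v B : ℝ × (Fin n → ℝ) → Fin n → ℝ} {𝒯 : ℝ × (Fin n → ℝ) → ℝ}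
    (hv : ContDiff ℝ (⊤ : ℕ∞) v) (hB : ContDiff ℝ (⊤ : ℕ∞) B) (h𝒯 : ContDiff ℝ (⊤ : ℕ∞) 𝒯)
    (h𝒯pos : ∀ p, 0 < 𝒯 p) (c : ℝ) (i j : Fin n) (p : ℝ × (Fin n → ℝ)) :
    td n (fun r => v r i + c * Real.sqrt (𝒯 r) * B r j) p
      = td n (fun r => v r i) p
        + c * Real.sqrt (𝒯 p) * td n (fun r => B r j) p
        + c * B p j * ((2 * Real.sqrt (𝒯 p))⁻¹ * td n 𝒯 p) := by
  simp only [td]; exact dkey hv hB h𝒯 h𝒯pos c i j p _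

lemma matD_key {n : ℕ} {v B : ℝ × (Fin n → ℝ) → Fin n → ℝ} {𝒯 : ℝ × (Fin n → ℝ) → ℝ}
    (hv : ContDiff ℝ (⊤ : ℕ∞) v) (hB : ContDiff ℝ (⊤ : ℕ∞) B) (h𝒯 : ContDiff ℝ (⊤ : ℕ∞) 𝒯)
    (h𝒯pos : ∀ p, 0 < 𝒯 p) (c : ℝ) (i j : Fin n) (p : ℝ × (Fin n → ℝ)) :
    matD n v (fun r => v r i + c * Real.sqrt (𝒯 r) * B r j) p
      = matD n v (fun r => v r i) p
        + c * Real.sqrt (𝒯 p) * matD n v (fun r => B r j) p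
        + c * B p j * ((2 * Real.sqrt (𝒯 p))⁻¹ * matD n v 𝒯 p) := by
  simp only [matD]
  rw [td_key hv hB h𝒯 h𝒯pos c i j p,
    Finset.sum_congr rfl (fun k _ => by
      rw [sd_key hv hB h𝒯 h𝒯pos c i j k p, mul_add, mul_add] :
      ∀ k ∈ Finset.univ, v p k * sd n k (fun r => v r i + c * Real.sqrt (𝒯 r) * B r j) p
        = v p k * sd n k (fun r => v r i) p
          + v p k * (c * Real.sqrt (𝒯 p) * sd n k (fun r => B r j) p)
          + v p k * (c * B p j * ((2 * Real.sqrt (𝒯 p))⁻¹ * sd n k 𝒯 p))),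
    Finset.sum_add_distrib, Finset.sum_add_distrib]
  have e2 : ∑ k, v p k * (c * Real.sqrt (𝒯 p) * sd n k (fun r => B r j) p)
      = c * Real.sqrt (𝒯 p) * ∑ k, v p k * sd n k (fun r => B r j) p := by
    rw [Finset.mul_sum]; exact Finset.sum_congr rfl fun k _ => by ring
  have e3 : ∑ k, v p k * (c * B p j * ((2 * Real.sqrt (𝒯 p))⁻¹ * sd n k 𝒯 p))
      = c * B p j * ((2 * Real.sqrt (𝒯 p))⁻¹ * ∑ k, v p k * sd n k 𝒯 p) := by
    rw [Finset.mul_sum, Finset.mul_sum]; exact Finset.sum_congr rfl fun k _ => by ring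
  rw [e2, e3]; ring

lemma riemann_aux {n : ℕ} {v B : ℝ × (Fin n → ℝ) → Fin n → ℝ}
    {q 𝒯 : ℝ × (Fin n → ℝ) → ℝ}
    (hv : ContDiff ℝ (⊤ : ℕ∞) v) (hB : ContDiff ℝ (⊤ : ℕ∞) B)
    (h𝒯 : ContDiff ℝ (⊤ : ℕ∞) 𝒯) (h𝒯pos : ∀ p, 0 < 𝒯 p)
    (hmom : ∀ p, ∀ i, (𝒯 p)⁻¹ * matD n v (fun r => v r i) p
      - (∑ k, B p k * sd n k (fun r => B r i) p) = -(sd n i q p))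
    (hind : ∀ p, ∀ i, matD n v (fun r => B r i) p
      - (∑ k, B p k * sd n k (fun r => v r i) p) = -(divg n v p) * B p i)
    (hheat : ∀ p, matD n v 𝒯 p = 𝒯 p * lap n 𝒯 p)
    (hdivv : ∀ p, divg n v p = lap n 𝒯 p)
    (hdivB : ∀ p, divg n B p = 0)
    (c : ℝ) (hc : c * c = 1) (p : ℝ × (Fin n → ℝ)) (i : Fin n) :
    matD n v (fun r => v r i + c * Real.sqrt (𝒯 r) * B r i) p
      - c * ∑ k, Real.sqrt (𝒯 p) * B p k
          * sd n k (fun r => v r i + c * Real.sqrt (𝒯 r) * B r i) p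
    = -(𝒯 p * sd n i q p)
      - c * (1/2) * (Real.sqrt (𝒯 p) * B p i)
        * (∑ j, sd n j (fun r => v r j + 2 * c * Real.sqrt (𝒯 r) * B r j) p) := by
  have hs0 : 0 < Real.sqrt (𝒯 p) := Real.sqrt_pos.mpr (h𝒯pos p)
  have hss : Real.sqrt (𝒯 p) * Real.sqrt (𝒯 p) = 𝒯 p := Real.mul_self_sqrt (h𝒯pos p).le
  have hu : (2 * Real.sqrt (𝒯 p))⁻¹ * (2 * Real.sqrt (𝒯 p)) = 1 :=
    inv_mul_cancel₀ (by positivity)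
  have hTne : 𝒯 p ≠ 0 := (h𝒯pos p).ne'
  -- the b·∇ sum
  have sk : ∑ k, Real.sqrt (𝒯 p) * B p k
      * sd n k (fun r => v r i + c * Real.sqrt (𝒯 r) * B r i) p
      = Real.sqrt (𝒯 p) * ∑ k, B p k * sd n k (fun r => v r i) p
        + c * (Real.sqrt (𝒯 p) * Real.sqrt (𝒯 p))
          * ∑ k, B p k * sd n k (fun r => B r i) p
        + c * B p i * ((2 * Real.sqrt (𝒯 p))⁻¹ * Real.sqrt (𝒯 p))
          * ∑ k, B p k * sd n k 𝒯 p := by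
    rw [Finset.sum_congr rfl (fun k _ => by
        rw [sd_key hv hB h𝒯 h𝒯pos c i i k p]; ring :
      ∀ k ∈ Finset.univ, Real.sqrt (𝒯 p) * B p k
          * sd n k (fun r => v r i + c * Real.sqrt (𝒯 r) * B r i) p
        = Real.sqrt (𝒯 p) * (B p k * sd n k (fun r => v r i) p)
          + c * (Real.sqrt (𝒯 p) * Real.sqrt (𝒯 p)) * (B p k * sd n k (fun r => B r i) p)
          + c * B p i * ((2 * Real.sqrt (𝒯 p))⁻¹ * Real.sqrt (𝒯 p))
            * (B p k * sd n k 𝒯 p)),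
      Finset.sum_add_distrib, Finset.sum_add_distrib, ← Finset.mul_sum, ← Finset.mul_sum,
      ← Finset.mul_sum]
  -- the divergence sum
  have dk : ∑ j, sd n j (fun r => v r j + 2 * c * Real.sqrt (𝒯 r) * B r j) p
      = divg n v p + 2 * c * Real.sqrt (𝒯 p) * divg n B p
        + 2 * c * (2 * Real.sqrt (𝒯 p))⁻¹ * ∑ k, B p k * sd n k 𝒯 p := by
    rw [Finset.sum_congr rfl (fun j _ => by
        rw [sd_key hv hB h𝒯 h𝒯pos (2*c) j j j p]; ring :
      ∀ j ∈ Finset.univ, sd n j (fun r => v r j + 2 * c * Real.sqrt (𝒯 r) * B r j) p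
        = sd n j (fun r => v r j) p
          + 2 * c * Real.sqrt (𝒯 p) * sd n j (fun r => B r j) p
          + 2 * c * (2 * Real.sqrt (𝒯 p))⁻¹ * (B p j * sd n j 𝒯 p)),
      Finset.sum_add_distrib, Finset.sum_add_distrib, ← Finset.mul_sum, ← Finset.mul_sum]
    rfl
  have e1 : 𝒯 p * ((𝒯 p)⁻¹ * matD n v (fun r => v r i) p)
      = matD n v (fun r => v r i) p := by field_simp
  have e3 : matD n v 𝒯 p = 𝒯 p * divg n v p := by rw [hheat p, hdivv p]
  rw [matD_key hv hB h𝒯 h𝒯pos c i i p, sk, dk, hdivB p]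
  linear_combination (𝒯 p) * hmom p i - e1 + (c * Real.sqrt (𝒯 p)) * hind p i
    + (c * B p i * (2 * Real.sqrt (𝒯 p))⁻¹) * e3
    + (- (∑ k, B p k * sd n k (fun r => B r i) p)
        - c * B p i * divg n v p * (2 * Real.sqrt (𝒯 p))⁻¹) * hss
    + (- (Real.sqrt (𝒯 p) * Real.sqrt (𝒯 p)) * (∑ k, B p k * sd n k (fun r => B r i) p)) * hc
    + (c * B p i * divg n v p * Real.sqrt (𝒯 p) / 2) * hu


/-- For a smooth solution of the low Mach number MHD system, the momentum and induction
equations take the Riemann-invariant form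
D_−(v + b) = −𝒯∇q − (1/2) b div(v + 2b), D_+(v − b) = −𝒯∇q + (1/2) b div(v − 2b),
with b = 𝒯^{1/2} B and D_± = D_t ± b^k ∂_k. -/
theorem riemann_invariant_form_low_mach_MHD
    (n : ℕ) (v B : ℝ × (Fin n → ℝ) → Fin n → ℝ)
    (q 𝒯 : ℝ × (Fin n → ℝ) → ℝ)
    (hv : ContDiff ℝ (⊤ : ℕ∞) v) (hB : ContDiff ℝ (⊤ : ℕ∞) B) (hq : ContDiff ℝ (⊤ : ℕ∞) q)
    (h𝒯 : ContDiff ℝ (⊤ : ℕ∞) 𝒯) (h𝒯pos : ∀ p, 0 < 𝒯 p)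
    -- momentum equation: 𝒯⁻¹ D_t v − B^k ∂_k B = −∂q
    (hmom : ∀ p, ∀ i, (𝒯 p)⁻¹ * matD n v (fun r => v r i) p
      - (∑ k, B p k * sd n k (fun r => B r i) p) = -(sd n i q p))
    -- induction equation: D_t B − B^k ∂_k v = −(div v) B
    (hind : ∀ p, ∀ i, matD n v (fun r => B r i) p
      - (∑ k, B p k * sd n k (fun r => v r i) p) = -(divg n v p) * B p i)
    -- heat equation: D_t 𝒯 = 𝒯 Δ𝒯
    (hheat : ∀ p, matD n v 𝒯 p = 𝒯 p * lap n 𝒯 p)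
    -- div v = Δ𝒯
    (hdivv : ∀ p, divg n v p = lap n 𝒯 p)
    -- div B = 0
    (hdivB : ∀ p, divg n B p = 0) :
    ∀ p, ∀ i,
      -- D_−(v + b)^i = −𝒯 ∂_i q − (1/2) b^i div(v + 2b)
      (matD n v (fun r => v r i + Real.sqrt (𝒯 r) * B r i) p
          - ∑ k, Real.sqrt (𝒯 p) * B p k
              * sd n k (fun r => v r i + Real.sqrt (𝒯 r) * B r i) p
        = -(𝒯 p * sd n i q p)
          - (1/2) * (Real.sqrt (𝒯 p) * B p i)
            * (∑ j, sd n j (fun r => v r j + 2 * Real.sqrt (𝒯 r) * B r j) p))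
      ∧
      -- D_+(v − b)^i = −𝒯 ∂_i q + (1/2) b^i div(v − 2b)
      (matD n v (fun r => v r i - Real.sqrt (𝒯 r) * B r i) p
          + ∑ k, Real.sqrt (𝒯 p) * B p k
              * sd n k (fun r => v r i - Real.sqrt (𝒯 r) * B r i) p
        = -(𝒯 p * sd n i q p)
          + (1/2) * (Real.sqrt (𝒯 p) * B p i)
            * (∑ j, sd n j (fun r => v r j - 2 * Real.sqrt (𝒯 r) * B r j) p)) := by
  intro p i
  constructor
  · have h1 := riemann_aux hv hB h𝒯 h𝒯pos hmom hind hheat hdivv hdivB 1 (by norm_num) p i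
    simpa only [one_mul, mul_one] using h1
  · have h2 := riemann_aux hv hB h𝒯 h𝒯pos hmom hind hheat hdivv hdivB (-1) (by norm_num) p i
    simpa only [neg_mul, mul_neg, one_mul, mul_one, ← sub_eq_add_neg, sub_neg_eq_add] using h2
end

section
/- Let v be a smooth vector field, D_t = ∂_t + v^k∂_k, b a smooth vector field, and D_± = D_t ± b^k∂_k. Then for any smooth scalar φ, the commutator of the gradient with the double characteristic derivative satisfies [∇, D_+D_-]φ = ∇D_+(v−b)^i ∂_i φ + 2∇v^i ∂_i D_t φ − 2∇b^i b^j ∂_i∂_j φ − 2∇v^i ∂_i v^j ∂_j φ. -/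
open MeasureTheory

/-- D_± = D_t ± b^k ∂_k. -/
noncomputable def Dplus (n : ℕ) (v b : ℝ × (Fin n → ℝ) → Fin n → ℝ)
    (f : ℝ × (Fin n → ℝ) → ℝ) (p : ℝ × (Fin n → ℝ)) : ℝ :=
  matD n v f p + ∑ k, b p k * sd n k f p

noncomputable def Dminus (n : ℕ) (v b : ℝ × (Fin n → ℝ) → Fin n → ℝ)
    (f : ℝ × (Fin n → ℝ) → ℝ) (p : ℝ × (Fin n → ℝ)) : ℝ :=
  matD n v f p - ∑ k, b p k * sd n k f p

section helpers
variable {n : ℕ}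

noncomputable def pd (n : ℕ) (w : ℝ × (Fin n → ℝ)) (f : ℝ × (Fin n → ℝ) → ℝ)
    (p : ℝ × (Fin n → ℝ)) : ℝ := fderiv ℝ f p w

lemma contDiff_pd (w : ℝ × (Fin n → ℝ)) {f : ℝ × (Fin n → ℝ) → ℝ}
    (hf : ContDiff ℝ (⊤ : ℕ∞) f) : ContDiff ℝ (⊤ : ℕ∞) (pd n w f) :=
  (ContinuousLinearMap.apply ℝ ℝ w).contDiff.comp (hf.fderiv_right (by simp))

lemma pd_comm (w w' : ℝ × (Fin n → ℝ)) {f : ℝ × (Fin n → ℝ) → ℝ}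
    (hf : ContDiff ℝ (⊤ : ℕ∞) f) (p : ℝ × (Fin n → ℝ)) :
    pd n w (pd n w' f) p = pd n w' (pd n w f) p := by
  have hd : Differentiable ℝ (fderiv ℝ f) :=
    (hf.fderiv_right (m := 1) (by exact WithTop.coe_le_coe.2 le_top)).differentiable one_ne_zero
  have key : ∀ u u' : ℝ × (Fin n → ℝ),
      pd n u (pd n u' f) p = fderiv ℝ (fderiv ℝ f) p u u' := by
    intro u u'
    have : pd n u' f = fun q => (fderiv ℝ f q) u' := rfl
    rw [pd, this, fderiv_clm_apply (hd p) (differentiableAt_const _)]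
    simp
  rw [key, key, hf.contDiffAt.isSymmSndFDerivAt (by rw [minSmoothness_of_isRCLikeNormedField]; exact WithTop.coe_le_coe.2 le_top) w w']

lemma pd_add {f g : ℝ × (Fin n → ℝ) → ℝ} (w : ℝ × (Fin n → ℝ))
    (hf : Differentiable ℝ f) (hg : Differentiable ℝ g) (p : ℝ × (Fin n → ℝ)) :
    pd n w (fun q => f q + g q) p = pd n w f p + pd n w g p := by
  simp [pd, fderiv_fun_add (hf p) (hg p)]

lemma pd_sub {f g : ℝ × (Fin n → ℝ) → ℝ} (w : ℝ × (Fin n → ℝ))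
    (hf : Differentiable ℝ f) (hg : Differentiable ℝ g) (p : ℝ × (Fin n → ℝ)) :
    pd n w (fun q => f q - g q) p = pd n w f p - pd n w g p := by
  simp [pd, fderiv_fun_sub (hf p) (hg p)]

lemma pd_mul {f g : ℝ × (Fin n → ℝ) → ℝ} (w : ℝ × (Fin n → ℝ))
    (hf : Differentiable ℝ f) (hg : Differentiable ℝ g) (p : ℝ × (Fin n → ℝ)) :
    pd n w (fun q => f q * g q) p = pd n w f p * g p + f p * pd n w g p := by
  simp [pd, fderiv_fun_mul (hf p) (hg p)]; ring

lemma pd_sum {ι : Type*} (s : Finset ι) {F : ι → ℝ × (Fin n → ℝ) → ℝ} (w : ℝ × (Fin n → ℝ))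
    (hF : ∀ i, Differentiable ℝ (F i)) (p : ℝ × (Fin n → ℝ)) :
    pd n w (fun q => ∑ i ∈ s, F i q) p = ∑ i ∈ s, pd n w (F i) p := by
  simp [pd, fderiv_fun_sum (fun i _ => (hF i) p)]

/-- generic characteristic derivative -/
noncomputable def Dw (n : ℕ) (w : ℝ × (Fin n → ℝ) → Fin n → ℝ)
    (f : ℝ × (Fin n → ℝ) → ℝ) (p : ℝ × (Fin n → ℝ)) : ℝ :=
  td n f p + ∑ i, w p i * sd n i f p

lemma contDiff_Dw {w : ℝ × (Fin n → ℝ) → Fin n → ℝ} {f : ℝ × (Fin n → ℝ) → ℝ}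
    (hw : ContDiff ℝ (⊤ : ℕ∞) w) (hf : ContDiff ℝ (⊤ : ℕ∞) f) : ContDiff ℝ (⊤ : ℕ∞) (Dw n w f) :=
  (contDiff_pd _ hf).add (ContDiff.sum fun i _ =>
    (contDiff_pi.1 hw i).mul (contDiff_pd _ hf))

lemma Dw_comm {w : ℝ × (Fin n → ℝ) → Fin n → ℝ} (hw : ContDiff ℝ (⊤ : ℕ∞) w)
    {f : ℝ × (Fin n → ℝ) → ℝ} (hf : ContDiff ℝ (⊤ : ℕ∞) f) (p : ℝ × (Fin n → ℝ)) (j : Fin n) :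
    sd n j (Dw n w f) p
      = Dw n w (sd n j f) p + ∑ i, sd n j (fun q => w q i) p * sd n i f p := by
  have htd : ContDiff ℝ (⊤ : ℕ∞) (td n f) := contDiff_pd _ hf
  have hsd : ∀ k : Fin n, ContDiff ℝ (⊤ : ℕ∞) (sd n k f) := fun k => contDiff_pd _ hf
  have hwk : ∀ k : Fin n, ContDiff ℝ (⊤ : ℕ∞) (fun q => w q k) := fun k => contDiff_pi.1 hw k
  have key : sd n j (Dw n w f) p
      = td n (sd n j f) p
        + ∑ k, (sd n j (fun q => w q k) p * sd n k f p + w p k * sd n k (sd n j f) p) := by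
    have e0 : sd n j (Dw n w f) p
        = pd n ((0:ℝ), Pi.single j 1) (fun q => td n f q + ∑ k, w q k * sd n k f q) p := rfl
    rw [e0, pd_add _ (htd.differentiable (by simp))
        (Differentiable.fun_sum fun k _ => ((hwk k).mul (hsd k)).differentiable (by simp)) p,
      pd_sum _ _ (fun k => ((hwk k).mul (hsd k)).differentiable (by simp)) p]
    congr 1
    · exact pd_comm _ _ hf p
    · refine Finset.sum_congr rfl fun k _ => ?_
      rw [pd_mul _ ((hwk k).differentiable (by simp)) ((hsd k).differentiable (by simp)) p]
      have : pd n ((0:ℝ), Pi.single j 1) (sd n k f) p = sd n k (sd n j f) p := by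
        rw [show sd n k f = pd n ((0:ℝ), Pi.single k 1) f from rfl]
        exact pd_comm _ _ hf p
      rw [this]; rfl
  rw [key, Dw, Finset.sum_add_distrib]; ring

lemma Dw_add {w : ℝ × (Fin n → ℝ) → Fin n → ℝ} {f g : ℝ × (Fin n → ℝ) → ℝ}
    (hf : Differentiable ℝ f) (hg : Differentiable ℝ g) (p : ℝ × (Fin n → ℝ)) :
    Dw n w (fun q => f q + g q) p = Dw n w f p + Dw n w g p := by
  have h1 : td n (fun q => f q + g q) p = td n f p + td n g p := pd_add _ hf hg p
  have h2 : ∀ k : Fin n, sd n k (fun q => f q + g q) p = sd n k f p + sd n k g p :=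
    fun k => pd_add _ hf hg p
  simp only [Dw, h1, h2, mul_add, Finset.sum_add_distrib]; ring

lemma Dw_mul {w : ℝ × (Fin n → ℝ) → Fin n → ℝ} {f g : ℝ × (Fin n → ℝ) → ℝ}
    (hf : Differentiable ℝ f) (hg : Differentiable ℝ g) (p : ℝ × (Fin n → ℝ)) :
    Dw n w (fun q => f q * g q) p = Dw n w f p * g p + f p * Dw n w g p := by
  have h1 : td n (fun q => f q * g q) p = td n f p * g p + f p * td n g p := pd_mul _ hf hg p
  have h2 : ∀ k : Fin n, sd n k (fun q => f q * g q) p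
      = sd n k f p * g p + f p * sd n k g p := fun k => pd_mul _ hf hg p
  have h3 : ∑ k, w p k * (sd n k f p * g p + f p * sd n k g p)
      = (∑ k, w p k * sd n k f p) * g p + f p * ∑ k, w p k * sd n k g p := by
    rw [Finset.sum_mul, Finset.mul_sum, ← Finset.sum_add_distrib]
    exact Finset.sum_congr rfl fun k _ => by ring
  simp only [Dw, h1, h2, h3]; ring

lemma Dw_sum {w : ℝ × (Fin n → ℝ) → Fin n → ℝ} {ι : Type*} (s : Finset ι)
    {F : ι → ℝ × (Fin n → ℝ) → ℝ} (hF : ∀ i, Differentiable ℝ (F i)) (p : ℝ × (Fin n → ℝ)) :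
    Dw n w (fun q => ∑ i ∈ s, F i q) p = ∑ i ∈ s, Dw n w (F i) p := by
  have h1 : td n (fun q => ∑ i ∈ s, F i q) p = ∑ i ∈ s, td n (F i) p := pd_sum _ _ hF p
  have h2 : ∀ k : Fin n, sd n k (fun q => ∑ i ∈ s, F i q) p = ∑ i ∈ s, sd n k (F i) p :=
    fun k => pd_sum _ _ hF p
  simp only [Dw, h1, h2, Finset.mul_sum, Finset.sum_add_distrib]
  rw [Finset.sum_comm]

end helpers

section helpers2
variable {n : ℕ}

lemma Dw_split_add (v b : ℝ × (Fin n → ℝ) → Fin n → ℝ) (f : ℝ × (Fin n → ℝ) → ℝ)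
    (p : ℝ × (Fin n → ℝ)) :
    Dw n (fun q m => v q m + b q m) f p = Dw n v f p + ∑ k, b p k * sd n k f p := by
  simp only [Dw, add_mul, Finset.sum_add_distrib]; ring

lemma Dw_split_sub (v b : ℝ × (Fin n → ℝ) → Fin n → ℝ) (f : ℝ × (Fin n → ℝ) → ℝ)
    (p : ℝ × (Fin n → ℝ)) :
    Dw n (fun q m => v q m - b q m) f p = Dw n v f p - ∑ k, b p k * sd n k f p := by
  simp only [Dw, sub_mul, Finset.sum_sub_distrib]; ring

lemma Dplus_eq (v b : ℝ × (Fin n → ℝ) → Fin n → ℝ) (f : ℝ × (Fin n → ℝ) → ℝ)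
    (p : ℝ × (Fin n → ℝ)) :
    Dplus n v b f p = Dw n (fun q m => v q m + b q m) f p :=
  (Dw_split_add v b f p).symm

lemma Dminus_eq (v b : ℝ × (Fin n → ℝ) → Fin n → ℝ) (f : ℝ × (Fin n → ℝ) → ℝ)
    (p : ℝ × (Fin n → ℝ)) :
    Dminus n v b f p = Dw n (fun q m => v q m - b q m) f p :=
  (Dw_split_sub v b f p).symm

lemma sum_alg (m : ℕ) (Q P Aj Cj Vj Bj X bb : Fin m → ℝ) (C S Vc : Fin m → Fin m → ℝ)
    (hS : ∀ i k, S i k = S k i)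
    (hplus : ∀ i, Cj i + Aj i = 2 * Vj i)
    (hminus : ∀ i, Cj i - Aj i = -(2 * Bj i)) :
    (∑ i, ((Q i - ∑ k, Aj k * C k i) * P i + Cj i * (X i + ∑ k, bb k * S k i)))
      + ∑ i, Aj i * ((X i - ∑ k, bb k * S k i) + ∑ k, C i k * P k)
    = (∑ i, Q i * P i)
      + 2 * (∑ i, Vj i * (X i + ∑ k, Vc i k * P k))
      - 2 * (∑ i, ∑ k, Bj i * bb k * S i k)
      - 2 * (∑ i, ∑ k, Vj i * Vc i k * P k) := by
  have hD : (∑ i, (∑ k, Aj k * C k i) * P i) = ∑ i, Aj i * (∑ k, C i k * P k) := by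
    simp only [Finset.sum_mul, Finset.mul_sum]
    rw [Finset.sum_comm]
    exact Finset.sum_congr rfl fun i _ => Finset.sum_congr rfl fun k _ => by ring
  have key : ∀ i : Fin m,
      ((Q i - ∑ k, Aj k * C k i) * P i + Cj i * (X i + ∑ k, bb k * S k i))
        + Aj i * ((X i - ∑ k, bb k * S k i) + ∑ k, C i k * P k)
      = Q i * P i + 2 * (Vj i * (X i + ∑ k, Vc i k * P k))
          - 2 * (∑ k, Bj i * bb k * S i k) - 2 * (∑ k, Vj i * Vc i k * P k)
          + (Aj i * (∑ k, C i k * P k) - (∑ k, Aj k * C k i) * P i) := by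
    intro i
    have hU : ∑ k, Bj i * bb k * S i k = Bj i * ∑ k, bb k * S k i := by
      rw [Finset.mul_sum]
      exact Finset.sum_congr rfl fun k _ => by rw [hS i k]; ring
    have hV : ∑ k, Vj i * Vc i k * P k = Vj i * ∑ k, Vc i k * P k := by
      rw [Finset.mul_sum]
      exact Finset.sum_congr rfl fun k _ => by ring
    rw [hU, hV]
    linear_combination (X i) * hplus i + (∑ k, bb k * S k i) * hminus i
  calc (∑ i, ((Q i - ∑ k, Aj k * C k i) * P i + Cj i * (X i + ∑ k, bb k * S k i)))
        + ∑ i, Aj i * ((X i - ∑ k, bb k * S k i) + ∑ k, C i k * P k)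
      = ∑ i, (((Q i - ∑ k, Aj k * C k i) * P i + Cj i * (X i + ∑ k, bb k * S k i))
          + Aj i * ((X i - ∑ k, bb k * S k i) + ∑ k, C i k * P k)) :=
        Finset.sum_add_distrib.symm
    _ = ∑ i, (Q i * P i + 2 * (Vj i * (X i + ∑ k, Vc i k * P k))
          - 2 * (∑ k, Bj i * bb k * S i k) - 2 * (∑ k, Vj i * Vc i k * P k)
          + (Aj i * (∑ k, C i k * P k) - (∑ k, Aj k * C k i) * P i)) :=
        Finset.sum_congr rfl fun i _ => key i
    _ = _ := by
        simp only [Finset.sum_add_distrib, Finset.sum_sub_distrib]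
        rw [hD]
        simp only [← Finset.mul_sum]
        ring

end helpers2

/-- The commutator of the gradient with the double characteristic derivative D_+D_−:
[∇, D_+D_−]φ = ∇D_+(v−b)^i ∂_iφ + 2∇v^i ∂_i D_tφ − 2∇b^i b^j ∂_i∂_jφ − 2∇v^i ∂_iv^j ∂_jφ. -/
theorem commutator_gradient_with_DplusDminus
    (n : ℕ) (v b : ℝ × (Fin n → ℝ) → Fin n → ℝ)
    (hv : ContDiff ℝ (⊤ : ℕ∞) v) (hb : ContDiff ℝ (⊤ : ℕ∞) b)
    (φ : ℝ × (Fin n → ℝ) → ℝ) (hφ : ContDiff ℝ (⊤ : ℕ∞) φ) :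
    ∀ p, ∀ j,
      sd n j (fun r => Dplus n v b (fun s => Dminus n v b φ s) r) p
          - Dplus n v b (fun s => Dminus n v b (fun r => sd n j φ r) s) p
        = (∑ i, sd n j (fun r => Dplus n v b (fun s => v s i - b s i) r) p * sd n i φ p)
          + 2 * (∑ i, sd n j (fun r => v r i) p * sd n i (fun r => matD n v φ r) p)
          - 2 * (∑ i, ∑ k, sd n j (fun r => b r i) p * b p k
              * sd n i (fun r => sd n k φ r) p)
          - 2 * (∑ i, ∑ k, sd n j (fun r => v r i) p * sd n i (fun r => v r k) p
              * sd n k φ p) := by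
  intro p j
  have hvi : ∀ i : Fin n, ContDiff ℝ (⊤ : ℕ∞) (fun q => v q i) := fun i => contDiff_pi.1 hv i
  have hbi : ∀ i : Fin n, ContDiff ℝ (⊤ : ℕ∞) (fun q => b q i) := fun i => contDiff_pi.1 hb i
  have ha : ContDiff ℝ (⊤ : ℕ∞) (fun q m => v q m + b q m) :=
    contDiff_pi.2 fun i => (hvi i).add (hbi i)
  have hc : ContDiff ℝ (⊤ : ℕ∞) (fun q m => v q m - b q m) :=
    contDiff_pi.2 fun i => (hvi i).sub (hbi i)
  have hci : ∀ i : Fin n, ContDiff ℝ (⊤ : ℕ∞) (fun q => v q i - b q i) :=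
    fun i => (hvi i).sub (hbi i)
  have hsdφ : ∀ i : Fin n, ContDiff ℝ (⊤ : ℕ∞) (sd n i φ) := fun i => contDiff_pd _ hφ
  have hDc : ContDiff ℝ (⊤ : ℕ∞) (Dw n (fun q m => v q m - b q m) φ) := contDiff_Dw hc hφ
  have hDcj : ContDiff ℝ (⊤ : ℕ∞) (Dw n (fun q m => v q m - b q m) (sd n j φ)) :=
    contDiff_Dw hc (hsdφ j)
  have hsdc : ∀ i : Fin n, ContDiff ℝ (⊤ : ℕ∞) (sd n j (fun r => v r i - b r i)) :=
    fun i => contDiff_pd _ (hci i)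
  -- rewrite the statement in terms of `Dw`
  have hF1 : (fun r => Dplus n v b (fun s => Dminus n v b φ s) r)
      = Dw n (fun q m => v q m + b q m) (Dw n (fun q m => v q m - b q m) φ) := by
    funext r
    rw [show (fun s => Dminus n v b φ s) = Dw n (fun q m => v q m - b q m) φ from
      funext fun s => Dminus_eq v b φ s]
    exact Dplus_eq v b _ r
  have hF3 : Dplus n v b (fun s => Dminus n v b (fun r => sd n j φ r) s) p
      = Dw n (fun q m => v q m + b q m) (Dw n (fun q m => v q m - b q m) (sd n j φ)) p := by
    rw [show (fun s => Dminus n v b (fun r => sd n j φ r) s)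
        = Dw n (fun q m => v q m - b q m) (sd n j φ) from
      funext fun s => Dminus_eq v b (sd n j φ) s]
    exact Dplus_eq v b _ p
  have hF5 : ∀ i : Fin n, (fun r => Dplus n v b (fun s => v s i - b s i) r)
      = Dw n (fun q m => v q m + b q m) (fun q => v q i - b q i) :=
    fun i => funext fun r => Dplus_eq v b _ r
  have hF6 : (fun r => matD n v φ r) = Dw n v φ := rfl
  have hEta : ∀ k : Fin n, (fun r => sd n k φ r) = sd n k φ := fun k => rfl
  rw [hF1, hF3, hF6]
  simp only [hF5, hEta]
  have hMD : ∀ i : Fin n, sd n i (Dw n v φ) p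
      = Dw n v (sd n i φ) p + ∑ k, sd n i (fun q => v q k) p * sd n k φ p :=
    fun i => Dw_comm hv hφ p i
  simp only [hMD]
  -- expand the left-hand side
  have E1 := Dw_comm ha hDc p j
  rw [E1]
  have E2 : sd n j (Dw n (fun q m => v q m - b q m) φ)
      = fun q => Dw n (fun q m => v q m - b q m) (sd n j φ) q
          + ∑ i, sd n j (fun r => v r i - b r i) q * sd n i φ q :=
    funext fun q => Dw_comm hc hφ q j
  rw [E2]
  have E3 : Dw n (fun q m => v q m + b q m)
      (fun q => Dw n (fun q m => v q m - b q m) (sd n j φ) q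
          + ∑ i, sd n j (fun r => v r i - b r i) q * sd n i φ q) p
      = Dw n (fun q m => v q m + b q m) (Dw n (fun q m => v q m - b q m) (sd n j φ)) p
        + ∑ i, Dw n (fun q m => v q m + b q m)
            (fun q => sd n j (fun r => v r i - b r i) q * sd n i φ q) p := by
    have hFi : ∀ i : Fin n, Differentiable ℝ
        (fun q => sd n j (fun r => v r i - b r i) q * sd n i φ q) :=
      fun i => ((hsdc i).mul (hsdφ i)).differentiable (by simp)
    rw [Dw_add (hDcj.differentiable (by simp))
        (Differentiable.fun_sum fun i _ => hFi i) p, Dw_sum _ hFi p]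
  rw [E3]
  have E4 : ∀ i : Fin n, Dw n (fun q m => v q m + b q m)
      (fun q => sd n j (fun r => v r i - b r i) q * sd n i φ q) p
      = Dw n (fun q m => v q m + b q m) (sd n j (fun r => v r i - b r i)) p * sd n i φ p
        + sd n j (fun r => v r i - b r i) p
          * Dw n (fun q m => v q m + b q m) (sd n i φ) p :=
    fun i => Dw_mul ((hsdc i).differentiable (by simp))
      ((hsdφ i).differentiable (by simp)) p
  have E5 : ∀ i : Fin n, Dw n (fun q m => v q m + b q m) (sd n j (fun r => v r i - b r i)) p
      = sd n j (Dw n (fun q m => v q m + b q m) (fun q => v q i - b q i)) p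
        - ∑ k, sd n j (fun q => v q k + b q k) p * sd n k (fun r => v r i - b r i) p := by
    intro i
    have := Dw_comm ha (hci i) p j
    linarith
  have E6 : ∀ i : Fin n, sd n i (Dw n (fun q m => v q m - b q m) φ) p
      = Dw n (fun q m => v q m - b q m) (sd n i φ) p
        + ∑ k, sd n i (fun q => v q k - b q k) p * sd n k φ p :=
    fun i => Dw_comm hc hφ p i
  have E7a : ∀ i : Fin n, Dw n (fun q m => v q m + b q m) (sd n i φ) p
      = Dw n v (sd n i φ) p + ∑ k, b p k * sd n k (sd n i φ) p :=
    fun i => Dw_split_add v b _ p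
  have E7c : ∀ i : Fin n, Dw n (fun q m => v q m - b q m) (sd n i φ) p
      = Dw n v (sd n i φ) p - ∑ k, b p k * sd n k (sd n i φ) p :=
    fun i => Dw_split_sub v b _ p
  simp only [E4, E5, E6, E7a, E7c]
  have hS : ∀ i k : Fin n, sd n i (sd n k φ) p = sd n k (sd n i φ) p :=
    fun i k => pd_comm _ _ hφ p
  have hplus : ∀ i : Fin n, sd n j (fun r => v r i - b r i) p
      + sd n j (fun q => v q i + b q i) p = 2 * sd n j (fun r => v r i) p := by
    intro i
    have h1 : sd n j (fun q => v q i + b q i) p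
        = sd n j (fun q => v q i) p + sd n j (fun q => b q i) p :=
      pd_add _ ((hvi i).differentiable (by simp)) ((hbi i).differentiable (by simp)) p
    have h2 : sd n j (fun q => v q i - b q i) p
        = sd n j (fun q => v q i) p - sd n j (fun q => b q i) p :=
      pd_sub _ ((hvi i).differentiable (by simp)) ((hbi i).differentiable (by simp)) p
    rw [h1, h2]; ring
  have hminus : ∀ i : Fin n, sd n j (fun r => v r i - b r i) p
      - sd n j (fun q => v q i + b q i) p = -(2 * sd n j (fun r => b r i) p) := by
    intro i
    have h1 : sd n j (fun q => v q i + b q i) p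
        = sd n j (fun q => v q i) p + sd n j (fun q => b q i) p :=
      pd_add _ ((hvi i).differentiable (by simp)) ((hbi i).differentiable (by simp)) p
    have h2 : sd n j (fun q => v q i - b q i) p
        = sd n j (fun q => v q i) p - sd n j (fun q => b q i) p :=
      pd_sub _ ((hvi i).differentiable (by simp)) ((hbi i).differentiable (by simp)) p
    rw [h1, h2]; ring
  have key := sum_alg n
    (fun i => sd n j (Dw n (fun q m => v q m + b q m) (fun q => v q i - b q i)) p)
    (fun i => sd n i φ p)
    (fun i => sd n j (fun q => v q i + b q i) p)
    (fun i => sd n j (fun r => v r i - b r i) p)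
    (fun i => sd n j (fun r => v r i) p)
    (fun i => sd n j (fun r => b r i) p)
    (fun i => Dw n v (sd n i φ) p)
    (fun k => b p k)
    (fun x y => sd n x (fun r => v r y - b r y) p)
    (fun x y => sd n x (sd n y φ) p)
    (fun x y => sd n x (fun r => v r y) p)
    hS hplus hminus
  linarith [key]
end
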